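/- Let n ≥ 2 with ζ = exp(2πi/n), r ≥ 1, and work in A = ℂ[x₁,…,x_r]/(x₁ⁿ−1,…,x_rⁿ−1). Define g_t = ∏_{e=1}^{r} (x_eⁿ−1)/(x_e−ζ^t) (each factor the polynomial Σ_{j=0}^{n−1} ζ^{t(n−1−j)} x_e^j) and h_p = Σ_{a₁+⋯+a_r ≡ p mod n} x₁^{a₁}⋯x_r^{a_r} (sum over tuples with 0 ≤ a_i ≤ n−1). Then g_t = Σ_{j=0}^{n−1} ζ^{−t(j+r)} h_j. -/
import Mathlib


open MvPolynomial Finset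

/-- Change of basis `g_t = Σ_j ζ^{-t(j+r)} h_j` between the canonical generators
and the homogeneous generators, at the level of representatives with all
exponents `≤ n-1` in `ℂ[x₁,…,x_r]` (hence also in the quotient
`ℂ[x₁,…,x_r]/(x₁ⁿ−1,…,x_rⁿ−1)`). -/
theorem stmt_18 (n r : ℕ) (hn : 2 ≤ n) (hr : 1 ≤ r)
    (ζ : ℂ) (hζ : ζ = Complex.exp (2 * Real.pi * Complex.I / n))
    (g : ℕ → MvPolynomial (Fin r) ℂ)
    (hg : ∀ t, g t = ∏ e : Fin r, ∑ j ∈ Finset.range n,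
        (ζ ^ (t * (n - 1 - j))) • (X e ^ j : MvPolynomial (Fin r) ℂ))
    (h : ℕ → MvPolynomial (Fin r) ℂ)
    (hh : ∀ p, h p = ∑ a ∈ Finset.univ.filter
        (fun a : Fin r → Fin n => (∑ e : Fin r, (a e : ℕ)) % n = p),
        ∏ e : Fin r, (X e ^ (a e : ℕ) : MvPolynomial (Fin r) ℂ)) :
    ∀ t : ℕ, g t = ∑ j ∈ Finset.range n, (ζ ^ (-(↑(t * (j + r)) : ℤ))) • h j := by
  intro t
  have hn0 : (n : ℂ) ≠ 0 := Nat.cast_ne_zero.mpr (by omega)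
  have hζ0 : ζ ≠ 0 := by rw [hζ]; exact Complex.exp_ne_zero _
  have hζn : ζ ^ n = 1 := by
    rw [hζ, ← Complex.exp_nat_mul,
      show (n : ℂ) * (2 * Real.pi * Complex.I / n) = 2 * Real.pi * Complex.I by
        field_simp]
    exact Complex.exp_two_pi_mul_I
  have key : ∀ a b : ℤ, (n : ℤ) ∣ b - a → ζ ^ a = ζ ^ b := by
    rintro a b ⟨k, hk⟩
    have hb : b = a + (n : ℤ) * k := by linarith
    rw [hb, zpow_add₀ hζ0, zpow_mul, zpow_natCast, hζn, one_zpow, mul_one]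
  -- rewrite the RHS as a single sum over all tuples a : Fin r → Fin n
  have hRHS : ∑ j ∈ Finset.range n, (ζ ^ (-(↑(t * (j + r)) : ℤ))) • h j
      = ∑ a : Fin r → Fin n,
          (ζ ^ (-(↑(t * ((∑ e : Fin r, (a e : ℕ)) % n + r)) : ℤ))) •
            ∏ e : Fin r, (X e ^ (a e : ℕ) : MvPolynomial (Fin r) ℂ) := by
    simp_rw [hh, Finset.smul_sum]
    rw [← Finset.sum_fiberwise_of_maps_to
      (g := fun a : Fin r → Fin n => (∑ e : Fin r, (a e : ℕ)) % n)
      (t := Finset.range n)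
      (fun a _ => Finset.mem_range.mpr (Nat.mod_lt _ (by omega)))]
    refine Finset.sum_congr rfl fun j hj => Finset.sum_congr rfl fun a ha => ?_
    rw [Finset.mem_filter] at ha
    rw [ha.2]
  rw [hRHS, hg]
  simp_rw [fun e : Fin r => (Fin.sum_univ_eq_sum_range
    (fun j => (ζ ^ (t * (n - 1 - j))) • (X e ^ j : MvPolynomial (Fin r) ℂ)) n).symm]
  rw [Finset.prod_univ_sum]
  rw [Fintype.piFinset_univ]
  refine Finset.sum_congr rfl fun a _ => ?_
  simp_rw [MvPolynomial.smul_eq_C_mul]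
  rw [Finset.prod_mul_distrib, ← map_prod]
  congr 2
  rw [Finset.prod_pow_eq_pow_sum, ← Finset.mul_sum, ← zpow_natCast]
  apply key
  -- divisibility
  set S := ∑ e : Fin r, (a e : ℕ) with hS
  set K := ∑ e : Fin r, (n - 1 - (a e : ℕ)) with hK
  have hKS : K + S = r * (n - 1) := by
    rw [hK, hS, ← Finset.sum_add_distrib]
    have : ∀ e : Fin r, n - 1 - (a e : ℕ) + (a e : ℕ) = n - 1 := fun e => by
      have := (a e).isLt; omega
    simp [this, Finset.sum_const, Finset.card_univ, mul_comm]
  obtain ⟨m, hm⟩ : ∃ m, n = m + 1 := ⟨n - 1, by omega⟩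
  set q := S / n with hqdef
  set p := S % n with hpdef
  have hB : n * q + p = S := Nat.div_add_mod S n
  have hA : K + S = r * m := by rw [hKS, show n - 1 = m from by omega]
  have hA' : (K : ℤ) + S = r * m := by exact_mod_cast hA
  have hB' : (n : ℤ) * q + p = S := by exact_mod_cast hB
  have hn' : (n : ℤ) = m + 1 := by exact_mod_cast hm
  refine ⟨(t : ℤ) * q - t * r, ?_⟩
  push_cast
  linear_combination (-(t : ℤ)) * hB' - (t : ℤ) * hA' + ((t : ℤ) * r) * hn'
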